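/- Characterization of super-distinct partitions: for a partition P with frequency sequence f, the following are equivalent: (1) P is super-distinct (parts differ pairwise by at least 2); (2) ℓ(P) = μ₂(P); (3) the Burge code Ω(P) contains no substring bb; (4) f_i = 1 for i ∈ R(f) and f_i = 0 otherwise; (5) ∂f = (f₂, f₃, ...); (6) ∂P = P − 1; (7) Des(P) = P. -/

import Mathlib

open scoped Classical

noncomputable section

/-- `f` is a frequency sequence: `f 0 = 0` and finite support. -/
def IsFreq (f : ℕ → ℕ) : Prop := f 0 = 0 ∧ (Function.support f).Finite

/-- size `|f| = ∑ i·f i`. -/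
def fsize (f : ℕ → ℕ) : ℕ := ∑ᶠ n, n * f n

/-- length `ℓ(f) = ∑ f i`. -/
def flen (f : ℕ → ℕ) : ℕ := ∑ᶠ n, f n

/-- the support `S(f)`. -/
def suppF (f : ℕ → ℕ) : Set ℕ := {i | 1 ≤ i ∧ f i ≠ 0}

/-- `[i,j]` is a spread of `f`: a maximal interval contained in the support. -/
def IsSpread (f : ℕ → ℕ) (i j : ℕ) : Prop :=
  1 ≤ i ∧ i ≤ j ∧ (∀ k, i ≤ k → k ≤ j → f k ≠ 0) ∧ (i = 1 ∨ f (i - 1) = 0) ∧ f (j + 1) = 0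

/-- `L(f)`: every other element of each spread, starting from the left end. -/
def Lset (f : ℕ → ℕ) : Set ℕ :=
  {q | ∃ i j, IsSpread f i j ∧ i ≤ q ∧ q ≤ j ∧ (q - i) % 2 = 0}

/-- `R(f)`: every other element of each spread, starting from the right end. -/
def Rset (f : ℕ → ℕ) : Set ℕ :=
  {q | ∃ i j, IsSpread f i j ∧ i ≤ q ∧ q ≤ j ∧ (j - q) % 2 = 0}

/-- the 2-measure, as the cardinality of `R(f)`. -/
def mu2 (f : ℕ → ℕ) : ℕ := (Rset f).ncard

/-- The Burge demotion operator `∂`. -/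
def dB (f : ℕ → ℕ) : ℕ → ℕ := fun n =>
  if n = 0 then 0
  else f n - (if n ∈ Rset f then 1 else 0) + (if n + 1 ∈ Rset f then 1 else 0)

/-- The promotion operator `α`. -/
def aB (f : ℕ → ℕ) : ℕ → ℕ := fun n =>
  if n = 0 then 0
  else f n - (if n ∈ Lset f then 1 else 0) + (if n - 1 ∈ Lset f then 1 else 0)

/-- the shift `(f₂, f₃, …)`; on partitions this is `P ↦ P - 1`. -/
def tailF (f : ℕ → ℕ) : ℕ → ℕ := fun n => if n = 0 then 0 else f (n + 1)

/-- The operator `β`: `β(f) = (f₁ + 1, α(f₂, f₃, …))`. -/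
def bB (f : ℕ → ℕ) : ℕ → ℕ := fun n =>
  if n = 0 then 0 else if n = 1 then f 1 + 1 else aB (tailF f) (n - 1)

/-- the zero sequence (empty partition). -/
def zeroF : ℕ → ℕ := fun _ => 0

/-- `k` minimal with `∂^[k] f = 0`. -/
def chainK (f : ℕ → ℕ) : ℕ :=
  if h : ∃ m, dB^[m] f = zeroF then Nat.find h else 0

/-- The Burge code of `f`, as a list of letters; `false` = `a`, `true` = `b`.
The `i`-th letter (0-indexed `i`) records whether `∂^[i] f ∈ B`, i.e. `1 ∈ R(∂^[i] f)`. -/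
def burgeCode (f : ℕ → ℕ) : List Bool :=
  (List.range (chainK f + 1)).map fun i => if 1 ∈ Rset (dB^[i] f) then true else false

/-- descent set of a word: 1-indexed positions `i` with `ωᵢ = b`, `ω_{i+1} = a`. -/
def descSet (w : List Bool) : Set ℕ :=
  {i | 1 ≤ i ∧ w[i - 1]? = some true ∧ w[i]? = some false}

/-- the descent set of (the Burge code of) a partition. -/
def DesSet (f : ℕ → ℕ) : Set ℕ := descSet (burgeCode f)

/-- `Des(P)` regarded as a partition, via its frequency sequence. -/
def desFreq (f : ℕ → ℕ) : ℕ → ℕ := fun i => if i ∈ DesSet f then 1 else 0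

/-- the 2-measure as the maximal size of a subset of the support without
consecutive pairs. -/
def twoMeasure (f : ℕ → ℕ) : ℕ :=
  sSup {n | ∃ T : Finset ℕ, (↑T : Set ℕ) ⊆ suppF f ∧ (∀ x ∈ T, x + 1 ∉ T) ∧ T.card = n}

/-- evaluation at `i`: `ν_i(f) = i f_i + (i+1) f_{i+1} + 2 ∑_{j>i+1} f_j`, with `ν₀ = ν₁`. -/
def nuI (f : ℕ → ℕ) (i : ℕ) : ℕ :=
  (max i 1) * f (max i 1) + (max i 1 + 1) * f (max i 1 + 1)
    + 2 * ∑ᶠ j ∈ {j : ℕ | max i 1 + 1 < j}, f j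

/-- annihilation at `i`: `ρ_i(f) = (f₁, …, f_{i-1}, f_{i+2}, f_{i+3}, …)`, with `ρ₀ = ρ₁`. -/
def rhoI (f : ℕ → ℕ) (i : ℕ) : ℕ → ℕ := fun n =>
  if n = 0 then 0 else if n < max i 1 then f n else f (n + 2)

/-- `i ≥ 1` is right admissible in `f`. -/
def RightAdm (f : ℕ → ℕ) (i : ℕ) : Prop :=
  1 ≤ i ∧ 0 < f i ∧ (0 < f (i + 1) ∨ (f (i - 1) = 0 ∧ f (i + 1) = 0))

/-- `i ≥ 0` is left admissible in `f`. -/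
def LeftAdm (f : ℕ → ℕ) (i : ℕ) : Prop :=
  0 < f (i + 1) ∧ (0 < f i ∨ (f i = 0 ∧ f (i + 2) = 0))

/-- `i` is a maximal index for `f`: `ν_i(f)` is nonzero and maximal. -/
def MaxIdx (f : ℕ → ℕ) (i : ℕ) : Prop :=
  nuI f i ≠ 0 ∧ ∀ j, nuI f j ≤ nuI f i

end

/-!
On a super-distinct partition every part is a one-point spread, so `R(f)` is the support, `f`
is the indicator function of `R(f)` and `∂` lowers every part by one. Iterating, `∂^j f` is
`f` shifted down by `j`, so the `j`-th letter of the Burge code is `b` exactly when `j + 1` is a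
part; this gives (3) and (7). Conversely, if `∂f = (f₂, f₃, …)` then the excess `f - 1_{R(f)}`
is shift invariant, hence zero; if `Des(P) = P` then `P` is a set of descent positions, which
are never adjacent. Finally `ℓ(f) ≥ |S(f)| ≥ μ₂(f)`, with equality exactly when the parts are
distinct, resp. pairwise non-adjacent.

For (3) ⇒ (1) we induct along the demotion chain `f, ∂f, ∂²f, …`, which reaches `0`. If `∂f`
is super-distinct, then `f` has no spread of length `≥ 2` (`∂` would raise the multiplicity next
to its right end), and a repeated part `n` of `f` remains a part of `∂f` while `n - 1` becomes
one; this is impossible unless `n = 1`, and then the code starts with `bb`.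
-/

def SuperDistinct (f : ℕ → ℕ) : Prop := ∀ i, f i ≤ 1 ∧ (f i = 0 ∨ f (i + 1) = 0)

lemma eq_of_eq_succ_of_eventually_eq {α : Type*} {d : ℕ → α} {c : α} {n N : ℕ}
    (hstep : ∀ m, n ≤ m → d (m + 1) = d m) (hN : ∀ m, N ≤ m → d m = c) : d n = c := by
  have h : ∀ k, d (n + k) = d n := fun k => by
    induction k with
    | zero => rfl
    | succ k ih => rw [← add_assoc, hstep _ (by omega), ih]
  rw [← h N, hN _ (by omega)]

lemma eq_indicator_one_iff {α M : Type*} [Zero M] [One M] {s : Set α} {f : α → M} :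
    f = s.indicator 1 ↔ ∀ i, (i ∈ s → f i = 1) ∧ (i ∉ s → f i = 0) := by
  simp only [funext_iff, Set.indicator_apply, Pi.one_apply]
  refine forall_congr' fun i => ?_
  by_cases h : i ∈ s <;> simp [h]

section Rset

variable {f : ℕ → ℕ} {n q : ℕ}

lemma one_le_of_mem_Rset (h : q ∈ Rset f) : 1 ≤ q := by
  obtain ⟨i, j, hs, hiq, -, -⟩ := h
  exact hs.1.trans hiq

lemma ne_zero_of_mem_Rset (h : q ∈ Rset f) : f q ≠ 0 := by
  obtain ⟨i, j, hs, hiq, hqj, -⟩ := h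
  exact hs.2.2.1 q hiq hqj

lemma IsSpread.right_eq {a b a' b' : ℕ} (h : IsSpread f a b) (h' : IsSpread f a' b')
    (ha : a ≤ q) (hb : q ≤ b) (ha' : a' ≤ q) (hb' : q ≤ b') : b = b' := by
  obtain ⟨-, -, hz, -, he⟩ := h
  obtain ⟨-, -, hz', -, he'⟩ := h'
  by_contra hne
  rcases Nat.lt_or_gt_of_ne hne with hl | hl
  · exact hz' (b + 1) (by omega) (by omega) he
  · exact hz (b' + 1) (by omega) (by omega) he'

lemma succ_notMem_Rset (h : q ∈ Rset f) : q + 1 ∉ Rset f := by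
  rintro ⟨a', b', hs', ha', hb', hp'⟩
  obtain ⟨a, b, hs, ha, hb, hp⟩ := h
  have hqb : q + 1 ≤ b := by
    by_contra! hbq
    obtain rfl : q = b := by omega
    exact hs'.2.2.1 (q + 1) ha' hb' hs.2.2.2.2
  have := hs.right_eq hs' (by omega) hqb ha' hb'
  omega

lemma mem_Rset_of_succ_eq_zero (hq : 1 ≤ q) (hfq : f q ≠ 0) (hfq1 : f (q + 1) = 0) :
    q ∈ Rset f := by
  set k := Nat.findGreatest (fun k => f k = 0) q with hk
  have hkq : k < q := lt_of_le_of_ne (Nat.findGreatest_le q) fun h =>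
    hfq (Nat.findGreatest_of_ne_zero (P := fun k => f k = 0) h (by omega))
  refine ⟨k + 1, q, ⟨by omega, by omega, fun m hm hmq => ?_, ?_, hfq1⟩, by omega, le_rfl, by simp⟩
  · exact Nat.findGreatest_is_greatest (P := fun k => f k = 0) (by omega) hmq
  · rcases Nat.eq_zero_or_pos k with h | h
    · exact Or.inl (by omega)
    · exact Or.inr (by
        simpa using Nat.findGreatest_of_ne_zero (P := fun k => f k = 0) hk.symm h.ne')

lemma indicator_Rset_le (n : ℕ) : (Rset f).indicator 1 n ≤ f n := by
  by_cases h : n ∈ Rset f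
  · simpa [h] using Nat.one_le_iff_ne_zero.2 (ne_zero_of_mem_Rset h)
  · simp [h]

lemma dB_apply (hn : n ≠ 0) :
    dB f n = f n - (Rset f).indicator 1 n + (Rset f).indicator 1 (n + 1) := by
  simp [dB, hn, Set.indicator_apply]

lemma dB_apply_eq_zero (h : f n = 0) (h1 : f (n + 1) = 0) : dB f n = 0 := by
  have hn : n ∉ Rset f := fun hm => ne_zero_of_mem_Rset hm h
  have hn1 : n + 1 ∉ Rset f := fun hm => ne_zero_of_mem_Rset hm h1
  simp [dB, h, hn, hn1]

lemma IsFreq.exists_bound (hf : IsFreq f) : ∃ N, ∀ m, N < m → f m = 0 := by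
  obtain ⟨N, hN⟩ := hf.2.bddAbove
  exact ⟨N, fun m hm => by_contra fun h => absurd (hN h) (by omega)⟩

end Rset

section Indicator

variable {f : ℕ → ℕ}

lemma SuperDistinct.eq_indicator_Rset (h0 : f 0 = 0) (hsd : SuperDistinct f) :
    f = (Rset f).indicator 1 := by
  funext i
  by_cases hi : f i = 0
  · have : i ∉ Rset f := fun h => ne_zero_of_mem_Rset h hi
    simp [hi, this]
  · have hR : i ∈ Rset f := mem_Rset_of_succ_eq_zero
      (Nat.one_le_iff_ne_zero.2 fun h => hi (h ▸ h0)) hi ((hsd i).2.resolve_left hi)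
    have := (hsd i).1
    simp only [Set.indicator_of_mem hR, Pi.one_apply]
    omega

lemma superDistinct_of_eq_indicator_Rset (h : f = (Rset f).indicator 1) : SuperDistinct f := by
  have hmem : ∀ i, f i ≠ 0 → i ∈ Rset f := fun i hi =>
    Set.mem_of_indicator_ne_zero (congrFun h i ▸ hi)
  refine fun i => ⟨?_, ?_⟩
  · rw [congrFun h i]
    exact Set.indicator_apply_le' (fun _ => le_rfl) (fun _ => zero_le_one)
  · by_contra! hc
    exact succ_notMem_Rset (hmem i hc.1) (hmem (i + 1) hc.2)

lemma dB_eq_tailF_of_eq_indicator_Rset (h : f = (Rset f).indicator 1) : dB f = tailF f := by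
  funext n
  rcases eq_or_ne n 0 with rfl | hn
  · rfl
  · rw [dB_apply hn, ← congrFun h n, ← congrFun h (n + 1)]
    simp [tailF, hn]

lemma eq_indicator_Rset_of_dB_eq_tailF (hf : IsFreq f) (h : dB f = tailF f) :
    f = (Rset f).indicator 1 := by
  obtain ⟨N, hN⟩ := hf.exists_bound
  have hstep : ∀ m, 1 ≤ m →
      f (m + 1) - (Rset f).indicator 1 (m + 1) = f m - (Rset f).indicator 1 m := by
    intro m hm
    have hm' := congrFun h m
    rw [dB_apply (by omega)] at hm'
    simp only [tailF, if_neg (show m ≠ 0 by omega)] at hm'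
    have := indicator_Rset_le (f := f) m
    have := indicator_Rset_le (f := f) (m + 1)
    omega
  have hzero : ∀ m, N + 1 ≤ m → f m - (Rset f).indicator 1 m = 0 := fun m hm => by
    simp [hN m hm]
  funext n
  rcases eq_or_ne n 0 with rfl | hn
  · have : 0 ∉ Rset f := fun h' => absurd (one_le_of_mem_Rset h') (by omega)
    simp [hf.1, this]
  · have : f n - (Rset f).indicator 1 n = 0 :=
      eq_of_eq_succ_of_eventually_eq (d := fun m => f m - (Rset f).indicator 1 m)
        (fun m hm => hstep m (by omega)) hzero
    have := indicator_Rset_le (f := f) n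
    omega

end Indicator

section TwoMeasure

lemma sSup_card_subset_le {α : Type*} (s : Finset α) (p : Finset α → Prop) :
    sSup {n | ∃ t : Finset α, (↑t : Set α) ⊆ ↑s ∧ p t ∧ t.card = n} ≤ s.card :=
  csSup_le' <| by
    rintro _ ⟨t, ht, -, rfl⟩
    exact Finset.card_le_card (Finset.coe_subset.1 ht)

lemma sSup_card_subset_eq_card_iff {α : Type*} {s : Finset α} {p : Finset α → Prop}
    (hp : p ∅) :
    sSup {n | ∃ t : Finset α, (↑t : Set α) ⊆ ↑s ∧ p t ∧ t.card = n} = s.card ↔ p s := by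
  set A := {n | ∃ t : Finset α, (↑t : Set α) ⊆ ↑s ∧ p t ∧ t.card = n}
  have hbdd : BddAbove A := ⟨s.card, by rintro _ ⟨t, ht, -, rfl⟩; exact Finset.card_le_card ht⟩
  constructor
  · intro h
    obtain ⟨t, ht, hpt, hcard⟩ := Nat.sSup_mem ⟨0, show 0 ∈ A from ⟨∅, by simp, hp, rfl⟩⟩ hbdd
    rwa [Finset.eq_of_subset_of_card_le (Finset.coe_subset.1 ht) (by omega)] at hpt
  · intro hps
    exact le_antisymm (sSup_card_subset_le s p) (le_csSup hbdd ⟨s, subset_rfl, hps, rfl⟩)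

variable {f : ℕ → ℕ}

lemma IsFreq.suppF_eq (hf : IsFreq f) : suppF f = ↑hf.2.toFinset := by
  ext i
  simp only [suppF, Set.mem_ofPred_eq, Set.Finite.coe_toFinset, Function.mem_support,
    and_iff_right_iff_imp]
  exact fun hi => Nat.one_le_iff_ne_zero.2 fun h => hi (h ▸ hf.1)

lemma IsFreq.card_le_flen (hf : IsFreq f) : hf.2.toFinset.card ≤ flen f := by
  rw [flen, finsum_eq_sum f hf.2, Finset.card_eq_sum_ones]
  exact Finset.sum_le_sum fun i hi => Nat.one_le_iff_ne_zero.2 (hf.2.mem_toFinset.1 hi)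

lemma IsFreq.flen_eq_card_iff (hf : IsFreq f) :
    flen f = hf.2.toFinset.card ↔ ∀ n, f n ≤ 1 := by
  rw [flen, finsum_eq_sum f hf.2, Finset.card_eq_sum_ones, eq_comm,
    Finset.sum_eq_sum_iff_of_le fun i hi => Nat.one_le_iff_ne_zero.2 (hf.2.mem_toFinset.1 hi)]
  refine ⟨fun h n => ?_, fun h i hi => ?_⟩
  · by_cases hn : f n = 0
    · simp [hn]
    · exact (h n (hf.2.mem_toFinset.2 hn)).ge
  · have := h i
    have : f i ≠ 0 := hf.2.mem_toFinset.1 hi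
    omega

theorem IsFreq.flen_eq_twoMeasure_iff (hf : IsFreq f) :
    flen f = twoMeasure f ↔ SuperDistinct f := by
  have hle := sSup_card_subset_le hf.2.toFinset fun t => ∀ x ∈ t, x + 1 ∉ t
  have heq := sSup_card_subset_eq_card_iff (s := hf.2.toFinset)
    (p := fun t => ∀ x ∈ t, x + 1 ∉ t) (by simp)
  rw [← hf.suppF_eq] at hle heq
  change twoMeasure f ≤ _ at hle
  change twoMeasure f = _ ↔ _ at heq
  have hcard := hf.card_le_flen
  have hsplit : flen f = twoMeasure f ↔
      flen f = hf.2.toFinset.card ∧ twoMeasure f = hf.2.toFinset.card := by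
    omega
  rw [hsplit, hf.flen_eq_card_iff, heq, SuperDistinct, forall_and]
  simp only [Set.Finite.mem_toFinset, Function.mem_support, ne_eq, not_not, or_iff_not_imp_left]

end TwoMeasure

section Demotion

variable {f : ℕ → ℕ}

lemma isFreq_dB (hf : IsFreq f) : IsFreq (dB f) := by
  refine ⟨by simp [dB], (hf.2.union (hf.2.image (· - 1))).subset fun n hn => ?_⟩
  by_contra h
  simp only [Set.mem_union, Function.mem_support, Set.mem_image, not_or, not_not,
    not_exists, not_and] at h
  exact hn (dB_apply_eq_zero h.1 (by_contra fun h' => h.2 (n + 1) h' rfl))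

/-- If `N` is the largest part, it is the right end of the last spread, so `∂` lowers its
multiplicity by one and creates no larger part. -/
lemma exists_iterate_dB_eq_zeroF_of_bound (N : ℕ) :
    ∀ f : ℕ → ℕ, f 0 = 0 → (∀ m, N < m → f m = 0) → ∃ k, dB^[k] f = zeroF := by
  induction N with
  | zero =>
    intro f h0 hN
    exact ⟨0, funext fun m => by rcases m with _ | m; exacts [h0, hN _ (by omega)]⟩
  | succ N ih =>
    intro f h0 hN
    obtain ⟨c, hc⟩ : ∃ c, f (N + 1) = c := ⟨_, rfl⟩
    induction c generalizing f with
    | zero =>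
      refine ih f h0 fun m hm => ?_
      rcases (show m = N + 1 ∨ N + 1 < m by omega) with rfl | hm'
      exacts [hc, hN m hm']
    | succ c ihc =>
      have hR : N + 1 ∈ Rset f :=
        mem_Rset_of_succ_eq_zero (by omega) (by omega) (hN _ (by omega))
      have hR' : N + 1 + 1 ∉ Rset f := fun h => ne_zero_of_mem_Rset h (hN _ (by omega))
      obtain ⟨k, hk⟩ := ihc (dB f) (by simp [dB])
        (fun m hm => dB_apply_eq_zero (hN m hm) (hN _ (by omega)))
        (by simp [dB, hR, hR', hc])
      exact ⟨k + 1, hk⟩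

lemma IsFreq.exists_iterate_dB_eq_zeroF (hf : IsFreq f) : ∃ k, dB^[k] f = zeroF := by
  obtain ⟨N, hN⟩ := hf.exists_bound
  exact exists_iterate_dB_eq_zeroF_of_bound N f hf.1 hN

lemma IsFreq.dB_induction {P : (ℕ → ℕ) → Prop} (hf : IsFreq f) (zero : P zeroF)
    (step : ∀ g, IsFreq g → g ≠ zeroF → P (dB g) → P g) : P f := by
  obtain ⟨k, hk⟩ := hf.exists_iterate_dB_eq_zeroF
  induction k generalizing f with
  | zero => exact (show f = zeroF from hk) ▸ zero
  | succ k ih =>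
    by_cases hz : f = zeroF
    · exact hz ▸ zero
    · exact step f hf hz (ih (isFreq_dB hf) hk)

lemma IsFreq.chainK_eq_find (hf : IsFreq f) :
    chainK f = Nat.find hf.exists_iterate_dB_eq_zeroF :=
  dif_pos _

lemma IsFreq.chainK_dB (hf : IsFreq f) (hne : f ≠ zeroF) : chainK f = chainK (dB f) + 1 := by
  rw [hf.chainK_eq_find, (isFreq_dB hf).chainK_eq_find]
  exact Nat.find_comp_succ _ _ hne

end Demotion

section BurgeCode

variable {f : ℕ → ℕ}

lemma burgeCode_zeroF : burgeCode zeroF = [false] := by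
  have hk : chainK zeroF = 0 := by
    rw [chainK, dif_pos ⟨0, rfl⟩, Nat.find_eq_zero]
    rfl
  have hR : 1 ∉ Rset zeroF := fun h => ne_zero_of_mem_Rset h rfl
  simp [burgeCode, hk, hR]

lemma IsFreq.burgeCode_dB (hf : IsFreq f) (hne : f ≠ zeroF) :
    burgeCode f = (if 1 ∈ Rset f then true else false) :: burgeCode (dB f) := by
  rw [burgeCode, burgeCode, hf.chainK_dB hne, List.range_succ_eq_map, List.map_cons,
    List.map_map]
  rfl

lemma singleton_true_prefix_burgeCode_iff : [true] <+: burgeCode f ↔ 1 ∈ Rset f := by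
  rw [burgeCode, List.range_succ_eq_map, List.map_cons]
  by_cases h : 1 ∈ Rset f <;> simp [h]

lemma IsFreq.infix_burgeCode_iff (hf : IsFreq f) (hne : f ≠ zeroF) :
    [true, true] <:+: burgeCode f ↔
      (1 ∈ Rset f ∧ 1 ∈ Rset (dB f)) ∨ [true, true] <:+: burgeCode (dB f) := by
  rw [hf.burgeCode_dB hne, List.infix_cons_iff, List.cons_prefix_cons,
    singleton_true_prefix_burgeCode_iff]
  simp

lemma getElem?_burgeCode (j : ℕ) :
    (burgeCode f)[j]? =
      if j ≤ chainK f then some (if 1 ∈ Rset (dB^[j] f) then true else false) else none := by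
  rw [burgeCode, List.getElem?_map]
  by_cases h : j ≤ chainK f
  · rw [List.getElem?_range (by omega), if_pos h]
    rfl
  · rw [List.getElem?_eq_none (by simp only [List.length_range]; omega), if_neg h]
    rfl

end BurgeCode

section SuperDistinct

variable {f : ℕ → ℕ} {n i : ℕ}

lemma SuperDistinct.dB_eq_tailF (h0 : f 0 = 0) (hsd : SuperDistinct f) : dB f = tailF f :=
  dB_eq_tailF_of_eq_indicator_Rset (hsd.eq_indicator_Rset h0)

lemma superDistinct_tailF (hsd : SuperDistinct f) : SuperDistinct (tailF f) := by
  intro n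
  rcases n with _ | n
  · simp [tailF]
  · simpa [tailF, add_assoc] using hsd (n + 2)

lemma tailF_iterate_apply (hn : n ≠ 0) (j : ℕ) : tailF^[j] f n = f (n + j) := by
  induction j generalizing f with
  | zero => rfl
  | succ j ih =>
    rw [Function.iterate_succ_apply, ih, tailF, if_neg (by omega)]
    congr 1

lemma SuperDistinct.iterate_dB (h0 : f 0 = 0) (hsd : SuperDistinct f) (j : ℕ) :
    dB^[j] f = tailF^[j] f := by
  induction j generalizing f with
  | zero => rfl
  | succ j ih =>
    rw [Function.iterate_succ_apply, Function.iterate_succ_apply, hsd.dB_eq_tailF h0,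
      ih rfl (superDistinct_tailF hsd)]

lemma SuperDistinct.one_mem_Rset_iterate_dB_iff (h0 : f 0 = 0) (hsd : SuperDistinct f)
    (j : ℕ) : 1 ∈ Rset (dB^[j] f) ↔ f (j + 1) ≠ 0 := by
  have h1 : tailF^[j] f 1 = f (j + 1) := by rw [tailF_iterate_apply one_ne_zero, add_comm]
  have h2 : tailF^[j] f 2 = f (j + 1 + 1) := by rw [tailF_iterate_apply two_ne_zero]; ring_nf
  rw [hsd.iterate_dB h0, ← h1]
  refine ⟨ne_zero_of_mem_Rset, fun h => mem_Rset_of_succ_eq_zero le_rfl h ?_⟩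
  rw [h2]
  exact (hsd (j + 1)).2.resolve_left (h1 ▸ h)

lemma SuperDistinct.le_chainK (hf : IsFreq f) (hsd : SuperDistinct f) (hi : f i ≠ 0) :
    i ≤ chainK f := by
  rw [hf.chainK_eq_find, Nat.le_find_iff]
  intro m hm hz
  have := congrFun (hsd.iterate_dB hf.1 m) (i - m)
  rw [hz, tailF_iterate_apply (by omega), Nat.sub_add_cancel hm.le] at this
  exact hi this.symm

lemma SuperDistinct.mem_DesSet_iff (hf : IsFreq f) (hsd : SuperDistinct f) (hi : 1 ≤ i) :
    i ∈ DesSet f ↔ f i ≠ 0 := by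
  simp only [DesSet, descSet, Set.mem_ofPred_eq, getElem?_burgeCode,
    hsd.one_mem_Rset_iterate_dB_iff hf.1, Nat.sub_add_cancel hi]
  constructor
  · rintro ⟨-, h, -⟩
    split_ifs at h with h' <;> simp_all
  · intro h
    have hle := hsd.le_chainK hf h
    have h1 := (hsd i).2.resolve_left h
    simp [h, h1, hle, hi, show i - 1 ≤ chainK f by omega]

lemma SuperDistinct.desFreq_eq (hf : IsFreq f) (hsd : SuperDistinct f) : desFreq f = f := by
  funext i
  rcases Nat.eq_zero_or_pos i with rfl | hi
  · simp [desFreq, DesSet, descSet, hf.1]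
  · have := (hsd i).1
    simp only [desFreq, hsd.mem_DesSet_iff hf hi]
    split_ifs <;> omega

lemma succ_notMem_descSet {w : List Bool} (h : i ∈ descSet w) : i + 1 ∉ descSet w := by
  rintro ⟨-, h', -⟩
  rw [Nat.add_sub_cancel, h.2.2] at h'
  simp at h'

lemma superDistinct_of_desFreq_eq (h : desFreq f = f) : SuperDistinct f := by
  have hval : ∀ i, f i = if i ∈ DesSet f then 1 else 0 := fun i => (congrFun h i).symm
  refine fun i => ⟨by rw [hval]; split_ifs <;> simp, ?_⟩
  by_contra! hc
  have hmem : ∀ j, f j ≠ 0 → j ∈ DesSet f := fun j hj => by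
    by_contra hm
    exact hj (by rw [hval, if_neg hm])
  exact succ_notMem_descSet (hmem i hc.1) (hmem (i + 1) hc.2)

lemma IsFreq.exists_dB_apply_eq_succ (hf : IsFreq f) (hn : f n ≠ 0) (hn1 : f (n + 1) ≠ 0) :
    ∃ m, f m ≠ 0 ∧ dB f m = f m + 1 := by
  obtain ⟨N, hN⟩ := hf.exists_bound
  have hex : ∃ b, n ≤ b ∧ f (b + 1) = 0 := ⟨N + n, by omega, hN _ (by omega)⟩
  set b := Nat.find hex
  obtain ⟨hnb, hb⟩ := Nat.find_spec hex
  have hrun : ∀ k, n ≤ k → k ≤ b → f k ≠ 0 := fun k hnk hkb => by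
    rcases eq_or_ne k n with rfl | hkn
    · exact hn
    · have := Nat.find_min hex (m := k - 1) (by omega)
      rwa [Nat.sub_add_cancel (by omega), not_and, imp_iff_right (by omega)] at this
  have hnb' : n + 1 ≤ b := by
    by_contra
    exact hn1 (by rwa [show n = b by omega])
  have h1n : 1 ≤ n := Nat.one_le_iff_ne_zero.2 fun h => hn (h ▸ hf.1)
  have hbR : b ∈ Rset f := mem_Rset_of_succ_eq_zero (by omega) (hrun b (by omega) le_rfl) hb
  have hb1R : b - 1 ∉ Rset f := fun h =>
    succ_notMem_Rset h (by rwa [Nat.sub_add_cancel (by omega)])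
  refine ⟨b - 1, hrun _ (by omega) (by omega), ?_⟩
  rw [dB_apply (by omega), Nat.sub_add_cancel (by omega), Set.indicator_of_notMem hb1R,
    Set.indicator_of_mem hbR]
  simp

lemma IsFreq.le_one_of_superDistinct_dB (hf : IsFreq f) (hsd : SuperDistinct (dB f))
    (hpair : ∀ n, f n = 0 ∨ f (n + 1) = 0) (h1 : ¬(1 ∈ Rset f ∧ 1 ∈ Rset (dB f))) (n : ℕ) :
    f n ≤ 1 := by
  by_contra! hn
  have hn0 : n ≠ 0 := fun h => by simp [h, hf.1] at hn
  have hn1 : f (n + 1) = 0 := (hpair n).resolve_left (by omega)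
  have hR : n ∈ Rset f := mem_Rset_of_succ_eq_zero (by omega) (by omega) hn1
  have hR' : n + 1 ∉ Rset f := fun h => ne_zero_of_mem_Rset h hn1
  have hdn : dB f n = f n - 1 := by
    rw [dB_apply hn0, Set.indicator_of_mem hR, Set.indicator_of_notMem hR']
    simp
  have hdn1 := (hsd n).1
  rcases eq_or_ne n 1 with rfl | hn1'
  · refine h1 ⟨hR, mem_Rset_of_succ_eq_zero le_rfl (by omega) ?_⟩
    exact (hsd 1).2.resolve_left (by omega)
  · have hprev : f (n - 1) = 0 := by
      rcases hpair (n - 1) with h | h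
      · exact h
      · rw [Nat.sub_add_cancel (by omega)] at h
        omega
    have hR'' : n - 1 ∉ Rset f := fun h => ne_zero_of_mem_Rset h hprev
    have hdprev : dB f (n - 1) = 1 := by
      rw [dB_apply (by omega), Nat.sub_add_cancel (by omega), Set.indicator_of_notMem hR'',
        Set.indicator_of_mem hR, hprev]
      rfl
    rcases (hsd (n - 1)).2 with h | h
    · omega
    · rw [Nat.sub_add_cancel (by omega)] at h
      omega

lemma IsFreq.superDistinct_iff_dB (hf : IsFreq f) :
    SuperDistinct f ↔ SuperDistinct (dB f) ∧ ¬(1 ∈ Rset f ∧ 1 ∈ Rset (dB f)) := by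
  constructor
  · intro hsd
    rw [hsd.dB_eq_tailF hf.1]
    refine ⟨superDistinct_tailF hsd, fun ⟨h1, h2⟩ => ne_zero_of_mem_Rset h2 ?_⟩
    exact (hsd 1).2.resolve_left (ne_zero_of_mem_Rset h1)
  · rintro ⟨hsd, h1⟩
    have hpair : ∀ n, f n = 0 ∨ f (n + 1) = 0 := fun n => by
      by_contra! hc
      obtain ⟨m, hm, hdm⟩ := hf.exists_dB_apply_eq_succ hc.1 hc.2
      have := (hsd m).1
      omega
    exact fun n => ⟨hf.le_one_of_superDistinct_dB hsd hpair h1 n, hpair n⟩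

theorem IsFreq.superDistinct_iff_not_infix_burgeCode (hf : IsFreq f) :
    SuperDistinct f ↔ ¬[true, true] <:+: burgeCode f := by
  refine hf.dB_induction (P := fun g => SuperDistinct g ↔ ¬[true, true] <:+: burgeCode g) ?_ ?_
  · rw [burgeCode_zeroF]
    exact ⟨fun _ h => by simpa using h.length_le, fun _ i => by simp [zeroF]⟩
  · intro g hg hne ih
    rw [hg.superDistinct_iff_dB, hg.infix_burgeCode_iff hne, ih]
    tauto

end SuperDistinct

/-- characterization of super-distinct partitions: the seven
conditions are equivalent. -/
theorem stmt14 (f : ℕ → ℕ) (hf : IsFreq f) :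
    [ -- (1) P is super-distinct
      (∀ i, f i ≤ 1 ∧ (f i = 0 ∨ f (i + 1) = 0)),
      -- (2) ℓ(P) = μ₂(P)
      flen f = twoMeasure f,
      -- (3) the Burge code contains no substring bb
      ¬ ∃ u v, burgeCode f = u ++ [true, true] ++ v,
      -- (4) f_i = 1 for i ∈ R(f) and f_i = 0 otherwise
      (∀ i, (i ∈ Rset f → f i = 1) ∧ (i ∉ Rset f → f i = 0)),
      -- (5) ∂f = (f₂, f₃, …)
      dB f = tailF f,
      -- (6) ∂P = P - 1 (in frequency representation)
      dB f = tailF f,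
      -- (7) Des(P) = P
      desFreq f = f ].TFAE := by
  tfae_have 1 ↔ 2 := hf.flen_eq_twoMeasure_iff.symm
  tfae_have 1 ↔ 3 := by
    rw [← SuperDistinct, hf.superDistinct_iff_not_infix_burgeCode, List.IsInfix]
    simp only [eq_comm]
  tfae_have 1 ↔ 4 := by
    rw [← eq_indicator_one_iff]
    exact ⟨SuperDistinct.eq_indicator_Rset hf.1, superDistinct_of_eq_indicator_Rset⟩
  tfae_have 4 ↔ 5 := by
    rw [← eq_indicator_one_iff]
    exact ⟨dB_eq_tailF_of_eq_indicator_Rset, eq_indicator_Rset_of_dB_eq_tailF hf⟩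
  tfae_have 5 ↔ 6 := Iff.rfl
  tfae_have 1 ↔ 7 := ⟨SuperDistinct.desFreq_eq hf, superDistinct_of_desFreq_eq⟩
  tfae_finish
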